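/- Let I be a homogeneous ideal in K[x_0,…,x_n]. Then the set of monomial ideals of the form in_w(I), as w varies over Γ^{n+1}, is finite. -/

import Mathlib

open MvPolynomial
open scoped Classical

noncomputable section

/-- Dot product `w·u` of a real weight vector with a nonnegative exponent vector. -/
def dotN {m : ℕ} (w : Fin m → ℝ) (u : Fin m →₀ ℕ) : ℝ := ∑ i, w i * (u i : ℝ)

/-- Dot product `w·u` of a real weight vector with an integer exponent vector. -/
def dotZ {n : ℕ} (w : Fin n → ℝ) (u : Fin n → ℤ) : ℝ := ∑ i, w i * (u i : ℝ)

/-- Dot product of two real vectors. -/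
def dotR {m : ℕ} (c x : Fin m → ℝ) : ℝ := ∑ i, c i * x i

/-- A field `K` together with: a nontrivial real-valued (additive) valuation
`val : K* → ℝ` (recorded as a function on `K`, constrained only at nonzero elements);
a residue field `𝕜` with the reduction map `res : K → 𝕜` (the canonical map
`R → 𝕜 = R/𝔪` on the valuation ring `R = {a : val a ≥ 0}`, junk elsewhere); and a fixed
splitting `t` of the valuation, i.e. a group-homomorphic section `w ↦ t^w` of `val`
defined on the value group `Γ = im val`. -/
structure ValSetup (K 𝕜 : Type) [Field K] [Field 𝕜] where
  val : K → ℝ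
  val_mul : ∀ {a b : K}, a ≠ 0 → b ≠ 0 → val (a * b) = val a + val b
  val_add : ∀ {a b : K}, a ≠ 0 → b ≠ 0 → a + b ≠ 0 → min (val a) (val b) ≤ val (a + b)
  val_one : val 1 = 0
  val_nontrivial : ∃ a : K, a ≠ 0 ∧ val a ≠ 0
  res : K → 𝕜
  res_add : ∀ {a b : K}, (a = 0 ∨ 0 ≤ val a) → (b = 0 ∨ 0 ≤ val b) → res (a + b) = res a + res b
  res_mul : ∀ {a b : K}, (a = 0 ∨ 0 ≤ val a) → (b = 0 ∨ 0 ≤ val b) → res (a * b) = res a * res b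
  res_one : res 1 = 1
  res_zero : res 0 = 0
  res_eq_zero_iff : ∀ {a : K}, a ≠ 0 → 0 ≤ val a → (res a = 0 ↔ 0 < val a)
  res_surjective : ∀ c : 𝕜, ∃ a : K, (a = 0 ∨ 0 ≤ val a) ∧ res a = c
  t : ℝ → K
  t_ne_zero : ∀ {r : ℝ}, (∃ a : K, a ≠ 0 ∧ val a = r) → t r ≠ 0
  t_add : ∀ {r₁ r₂ : ℝ}, (∃ a : K, a ≠ 0 ∧ val a = r₁) → (∃ a : K, a ≠ 0 ∧ val a = r₂) →
    t (r₁ + r₂) = t r₁ * t r₂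
  val_t : ∀ {r : ℝ}, (∃ a : K, a ≠ 0 ∧ val a = r) → val (t r) = r

namespace ValSetup

variable {K 𝕜 : Type} [Field K] [Field 𝕜]

/-- The value group `Γ = val(K*) ⊆ ℝ`. -/
def Gamma (V : ValSetup K 𝕜) : Set ℝ := {r : ℝ | ∃ a : K, a ≠ 0 ∧ V.val a = r}

/-- `trop(f)(w) = min { val(c_u) + w·u : c_u ≠ 0 }` for `f = Σ_u c_u x^u ∈ K[x_0,…,x_{m-1}]`. -/
def trop (V : ValSetup K 𝕜) {m : ℕ} (f : MvPolynomial (Fin m) K) (w : Fin m → ℝ) : ℝ :=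
  sInf ((fun u => V.val (coeff u f) + dotN w u) '' (f.support : Set (Fin m →₀ ℕ)))

/-- The initial form `in_w(f) = Σ_{val(c_u)+w·u = trop(f)(w)} (t^{-val(c_u)} c_u)‾ x^u`
in `𝕜[x_0,…,x_{m-1}]`. -/
def initialForm (V : ValSetup K 𝕜) {m : ℕ} (w : Fin m → ℝ) (f : MvPolynomial (Fin m) K) :
    MvPolynomial (Fin m) 𝕜 :=
  ∑ u ∈ f.support.filter (fun u => V.val (coeff u f) + dotN w u = V.trop f w),
    monomial u (V.res (V.t (-(V.val (coeff u f))) * coeff u f))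

/-- The initial ideal `in_w(I) = ⟨in_w(f) : f ∈ I⟩ ⊆ 𝕜[x_0,…,x_{m-1}]`. -/
def initialIdeal (V : ValSetup K 𝕜) {m : ℕ} (w : Fin m → ℝ)
    (I : Ideal (MvPolynomial (Fin m) K)) : Ideal (MvPolynomial (Fin m) 𝕜) :=
  Ideal.span {g | ∃ f ∈ I, g = V.initialForm w f}

/-- The Gröbner region `C_I[w] = {w' ∈ Γ^m : in_{w'}(I) = in_w(I)}`. -/
def groebnerRegion (V : ValSetup K 𝕜) {m : ℕ} (I : Ideal (MvPolynomial (Fin m) K))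
    (w : Fin m → ℝ) : Set (Fin m → ℝ) :=
  {w' | (∀ i, w' i ∈ V.Gamma) ∧ V.initialIdeal w' I = V.initialIdeal w I}

end ValSetup

/-- `trop(g)(v) = min { v·u : c_u ≠ 0 }` for `g ∈ 𝕜[x]`, w.r.t. the trivial valuation on `𝕜`. -/
def tropTriv {𝕜 : Type} [Field 𝕜] {m : ℕ} (g : MvPolynomial (Fin m) 𝕜) (v : Fin m → ℝ) : ℝ :=
  sInf ((fun u => dotN v u) '' (g.support : Set (Fin m →₀ ℕ)))

/-- Initial form `in_v(g)`, w.r.t. the trivial valuation on the residue field: the sum of the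
terms of `g` whose exponents `u` minimize `v·u`. -/
def initialFormTriv {𝕜 : Type} [Field 𝕜] {m : ℕ} (v : Fin m → ℝ) (g : MvPolynomial (Fin m) 𝕜) :
    MvPolynomial (Fin m) 𝕜 :=
  ∑ u ∈ g.support.filter (fun u => dotN v u = tropTriv g v), monomial u (coeff u g)

/-- Initial ideal `in_v(J) = ⟨in_v(g) : g ∈ J⟩` w.r.t. the trivial valuation. -/
def initialIdealTriv {𝕜 : Type} [Field 𝕜] {m : ℕ} (v : Fin m → ℝ)
    (J : Ideal (MvPolynomial (Fin m) 𝕜)) : Ideal (MvPolynomial (Fin m) 𝕜) :=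
  Ideal.span {h | ∃ g ∈ J, h = initialFormTriv v g}

/-- A homogeneous ideal of `R[x_0,…,x_{m-1}]`: one containing all homogeneous components of
its elements. -/
def IsHomogIdeal {R : Type} [CommSemiring R] {m : ℕ} (I : Ideal (MvPolynomial (Fin m) R)) :
    Prop :=
  ∀ f ∈ I, ∀ d : ℕ, homogeneousComponent d f ∈ I

/-- A monomial ideal: an ideal generated by monomials. -/
def IsMonomialIdeal {R : Type} [CommSemiring R] {m : ℕ} (J : Ideal (MvPolynomial (Fin m) R)) :
    Prop :=
  ∃ S : Set (Fin m →₀ ℕ), J = Ideal.span ((fun u => (monomial u 1 : MvPolynomial (Fin m) R)) '' S)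

/-!
For `w ∈ Γ^{n+1}` the initial ideal `in_w(I)` has the Hilbert function of `I`. Indeed, for a
finite-dimensional `K`-space `W` of polynomials, the initial forms of `W` span a `k`-space of
dimension `dim W`: a `K`-linear relation in `W`, rescaled through the splitting `t` so that the
summands of least tropical value survive reduction, becomes a `k`-linear relation among initial
forms; and for homogeneous `I` the degree-`d` part of `in_w(I)` is spanned by initial forms of
`I_d`. A monomial ideal is determined by its exponent set, an upper set of `ℕ^{n+1}` whose degree
levels the Hilbert function counts, and only finitely many upper sets share given level counts.
-/

lemma dotN_add {m : ℕ} (w : Fin m → ℝ) (u v : Fin m →₀ ℕ) :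
    dotN w (u + v) = dotN w u + dotN w v := by
  simp only [dotN, Finsupp.add_apply, Nat.cast_add, mul_add, Finset.sum_add_distrib]

lemma dotN_single {m : ℕ} (w : Fin m → ℝ) (i : Fin m) : dotN w (Finsupp.single i 1) = w i := by
  simp [dotN, Finsupp.single_apply]

def Ideal.homogeneousPart {σ R : Type*} [CommSemiring R] (I : Ideal (MvPolynomial σ R)) (d : ℕ) :
    Submodule R (MvPolynomial σ R) :=
  I.restrictScalars R ⊓ homogeneousSubmodule σ R d

lemma Ideal.mem_homogeneousPart {σ R : Type*} [CommSemiring R] {I : Ideal (MvPolynomial σ R)}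
    {d : ℕ} {p : MvPolynomial σ R} : p ∈ I.homogeneousPart d ↔ p ∈ I ∧ p.IsHomogeneous d :=
  Iff.rfl

instance Ideal.finiteDimensional_homogeneousPart {σ R : Type*} [Field R] [Finite σ]
    (I : Ideal (MvPolynomial σ R)) (d : ℕ) : FiniteDimensional R (I.homogeneousPart d) :=
  have : FiniteDimensional R (homogeneousSubmodule σ R d) :=
    Module.Finite.iff_fg.2 (homogeneousSubmodule_fg σ R d)
  Submodule.finiteDimensional_of_le inf_le_right

lemma MvPolynomial.restrictScalars_ideal_span_eq_span {σ R : Type*} [CommSemiring R]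
    {G : Set (MvPolynomial σ R)} (hG : ∀ i, ∀ g ∈ G, X i * g ∈ G) :
    (Ideal.span G).restrictScalars R = Submodule.span R G := by
  set M := Submodule.span R G
  have hX : ∀ i, ∀ q ∈ M, X i * q ∈ M := fun i q hq => by
    induction hq using Submodule.span_induction with
    | mem g hg => exact Submodule.subset_span (hG i g hg)
    | zero => simp
    | add x y _ _ hx hy => rw [mul_add]; exact M.add_mem hx hy
    | smul c x _ hx => rw [mul_smul_comm]; exact M.smul_mem c hx
  have hmul : ∀ p, ∀ q ∈ M, p * q ∈ M := fun p => by
    induction p using MvPolynomial.induction_on with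
    | C a => intro q hq; rw [← smul_eq_C_mul]; exact M.smul_mem a hq
    | add p₁ p₂ h₁ h₂ => intro q hq; rw [add_mul]; exact M.add_mem (h₁ q hq) (h₂ q hq)
    | mul_X p i hp => intro q hq; rw [mul_assoc]; exact hp _ (hX i q hq)
  refine le_antisymm (fun p hp => ?_) (Submodule.span_le.2 Ideal.subset_span)
  induction hp using Submodule.span_induction with
  | mem g hg => exact Submodule.subset_span hg
  | zero => exact M.zero_mem
  | add x y _ _ hx hy => exact M.add_mem hx hy
  | smul c x _ hx => exact hmul c x hx

lemma Ideal.isUpperSet_setOf_monomial_mem {σ R : Type*} [CommSemiring R]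
    (J : Ideal (MvPolynomial σ R)) : IsUpperSet {u | monomial u (1 : R) ∈ J} := by
  intro u v huv hu
  change monomial v (1 : R) ∈ J
  rw [← tsub_add_cancel_of_le huv, ← mul_one (1 : R), ← monomial_mul]
  exact J.mul_mem_left _ hu

lemma IsMonomialIdeal.restrictScalars_eq {R : Type} [CommSemiring R] [Nontrivial R] {m : ℕ}
    {J : Ideal (MvPolynomial (Fin m) R)} (hJ : IsMonomialIdeal J) :
    J.restrictScalars R = restrictSupport R {u | monomial u (1 : R) ∈ J} := by
  obtain ⟨S, rfl⟩ := hJ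
  ext p
  simp [mem_restrictSupport_iff, Set.subset_def, mem_ideal_span_monomial_image, support_monomial]

lemma IsMonomialIdeal.finrank_homogeneousPart {k : Type} [Field k] {m : ℕ}
    {J : Ideal (MvPolynomial (Fin m) k)} (hJ : IsMonomialIdeal J) (d : ℕ) :
    Module.finrank k (J.homogeneousPart d) =
      ({u | monomial u (1 : k) ∈ J} ∩ {u | u.degree = d}).ncard := by
  have : J.homogeneousPart d =
      restrictSupport k ({u | monomial u (1 : k) ∈ J} ∩ {u | u.degree = d}) := by
    rw [Ideal.homogeneousPart, hJ.restrictScalars_eq, homogeneousSubmodule_eq_finsupp_supported]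
    ext p
    exact Set.subset_inter_iff.symm
  rw [this, Module.finrank_eq_nat_card_basis (basisRestrictSupport k _), Nat.card_coe_set_eq]

open Filter in
/-- The limit `A` of the family along a non-principal ultrafilter is again an upper set; by
Dickson's lemma it is generated by finitely many exponents, so almost every member contains `A`,
and equal level counts then force almost every member to be `A`. -/
theorem Finsupp.finite_of_isUpperSet_of_ncard_eq {σ : Type*} [Finite σ]
    (𝒮 : Set (Set (σ →₀ ℕ))) (hup : ∀ E ∈ 𝒮, IsUpperSet E) (h : ℕ → ℕ)
    (hcount : ∀ E ∈ 𝒮, ∀ d, (E ∩ {u | u.degree = d}).ncard = h d) : 𝒮.Finite := by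
  by_contra hinf
  have : (cofinite ⊓ 𝓟 𝒮).NeBot := cofinite_inf_principal_neBot_iff.2 hinf
  set 𝒰 := Ultrafilter.of (cofinite ⊓ 𝓟 𝒮)
  have h𝒰 : (𝒰 : Filter (Set (σ →₀ ℕ))) ≤ cofinite ⊓ 𝓟 𝒮 := Ultrafilter.of_le _
  have hmem : ∀ᶠ E in 𝒰, E ∈ 𝒮 := (h𝒰.trans inf_le_right) (mem_principal_self 𝒮)
  set A : Set (σ →₀ ℕ) := {u | ∀ᶠ E in (𝒰 : Filter (Set (σ →₀ ℕ))), u ∈ E}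
  have hagree : ∀ F : Set (σ →₀ ℕ), F.Finite → ∀ᶠ E in 𝒰, E ∩ F = A ∩ F := by
    intro F hF
    have : ∀ᶠ E in 𝒰, ∀ u ∈ F, (u ∈ E ↔ u ∈ A) := (eventually_all_finite hF).2 fun u _ => by
      by_cases huA : u ∈ A
      · exact (show ∀ᶠ E in (𝒰 : Filter (Set (σ →₀ ℕ))), u ∈ E from huA).mono
          fun E (hE : u ∈ E) => iff_of_true hE huA
      · exact (Ultrafilter.eventually_not.2 huA).mono fun E hE => iff_of_false hE huA
    exact this.mono fun E hE => Set.ext fun u =>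
      and_congr_left fun hu => hE u hu
  have hA_count : ∀ d, (A ∩ {u | u.degree = d}).ncard = h d := fun d => by
    obtain ⟨E, hE, hEA⟩ := (hmem.and (hagree _ (Finsupp.finite_of_degree_eq d))).exists
    rw [← hEA, hcount E hE]
  set M := {u | Minimal (· ∈ A) u}
  have hM : M.Finite := WellQuasiOrderedLE.finite_of_isAntichain (setOfPred_minimal_antichain _)
  have hME : ∀ᶠ E in 𝒰, M ⊆ E := (eventually_all_finite hM).2 fun _ hu => hu.prop
  have hEA : ∀ᶠ E in 𝒰, E = A := (hmem.and hME).mono fun E ⟨hE, hME⟩ => by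
    have hAE : A ⊆ E := fun a ha => by
      obtain ⟨b, hba, hb⟩ := exists_minimal_le_of_wellFoundedLT (· ∈ A) a ha
      exact hup E hE hba (hME hb)
    refine hAE.antisymm' fun u hu => ?_
    have hlevel := Set.eq_of_subset_of_ncard_le (Set.inter_subset_inter_left _ hAE)
      (by rw [hcount E hE, hA_count]) ((Finsupp.finite_of_degree_eq u.degree).subset
        Set.inter_subset_right)
    have hu' : u ∈ E ∩ {v | v.degree = u.degree} := ⟨hu, rfl⟩
    rw [← hlevel] at hu'
    exact hu'.1
  obtain ⟨E, hE, hne⟩ := (hEA.and ((h𝒰.trans inf_le_left) (eventually_cofinite_ne A))).exists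
  exact hne hE

theorem finite_monomialIdeals_of_finrank_homogeneousPart_eq {k : Type} [Field k] {m : ℕ}
    (h : ℕ → ℕ) :
    {J : Ideal (MvPolynomial (Fin m) k) |
      IsMonomialIdeal J ∧ ∀ d, Module.finrank k (J.homogeneousPart d) = h d}.Finite := by
  refine Set.Finite.of_finite_image (f := fun J => {u | monomial u (1 : k) ∈ J}) ?_
    fun J₁ hJ₁ J₂ hJ₂ hE => Submodule.restrictScalars_injective k _ _ <| by
      rw [hJ₁.1.restrictScalars_eq, hJ₂.1.restrictScalars_eq]
      exact congrArg (restrictSupport k) hE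
  refine Finsupp.finite_of_isUpperSet_of_ncard_eq _ ?_ h ?_
  · rintro _ ⟨J, -, rfl⟩
    exact J.isUpperSet_setOf_monomial_mem
  · rintro _ ⟨J, ⟨hJ, hJh⟩, rfl⟩ d
    rw [← hJh d, hJ.finrank_homogeneousPart]

namespace ValSetup

variable {K 𝕜 : Type} [Field K] [Field 𝕜] (V : ValSetup K 𝕜)
variable {m : ℕ} {w : Fin m → ℝ} {f : MvPolynomial (Fin m) K} {I : Ideal (MvPolynomial (Fin m) K)}

def valueGroup : AddSubgroup ℝ where
  carrier := V.Gamma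
  zero_mem' := ⟨1, one_ne_zero, V.val_one⟩
  add_mem' := by
    rintro _ _ ⟨a, ha, rfl⟩ ⟨b, hb, rfl⟩
    exact ⟨a * b, mul_ne_zero ha hb, V.val_mul ha hb⟩
  neg_mem' := by
    rintro _ ⟨a, ha, rfl⟩
    refine ⟨a⁻¹, inv_ne_zero ha, ?_⟩
    have h := V.val_mul ha (inv_ne_zero ha)
    rw [mul_inv_cancel₀ ha, V.val_one] at h
    linarith

lemma val_mem_Gamma {a : K} (ha : a ≠ 0) : V.val a ∈ V.Gamma := ⟨a, ha, rfl⟩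

lemma dotN_mem_Gamma (hw : ∀ i, w i ∈ V.Gamma) (u : Fin m →₀ ℕ) :
    dotN w u ∈ V.Gamma :=
  V.valueGroup.sum_mem fun i _ => by
    simpa [mul_comm, nsmul_eq_mul] using V.valueGroup.nsmul_mem (hw i) (u i)

lemma val_t_neg_val_mul {a : K} (ha : a ≠ 0) : V.val (V.t (-V.val a) * a) = 0 := by
  have hγ : -V.val a ∈ V.Gamma := V.valueGroup.neg_mem (V.val_mem_Gamma ha)
  rw [V.val_mul (V.t_ne_zero hγ) ha, V.val_t hγ, neg_add_cancel]

lemma res_eq_zero_of_val_pos {a : K} (ha : a ≠ 0) (hpos : 0 < V.val a) : V.res a = 0 :=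
  (V.res_eq_zero_iff ha hpos.le).2 hpos

def integers : AddSubmonoid K where
  carrier := {a | a = 0 ∨ 0 ≤ V.val a}
  zero_mem' := Or.inl rfl
  add_mem' {a b} ha hb := by
    by_cases ha0 : a = 0
    · simpa [ha0] using hb
    by_cases hb0 : b = 0
    · simpa [hb0] using ha
    by_cases hab : a + b = 0
    · exact Or.inl hab
    exact Or.inr ((le_min (ha.resolve_left ha0) (hb.resolve_left hb0)).trans
      (V.val_add ha0 hb0 hab))

lemma res_sum {ι : Type*} (s : Finset ι) (g : ι → K) (h : ∀ i ∈ s, g i ∈ V.integers) :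
    V.res (∑ i ∈ s, g i) = ∑ i ∈ s, V.res (g i) := by
  classical
  induction s using Finset.induction with
  | empty => simpa using V.res_zero
  | insert i s hi ih =>
    have hs : ∀ j ∈ s, g j ∈ V.integers := fun j hj => h j (Finset.mem_insert_of_mem hj)
    rw [Finset.sum_insert hi, Finset.sum_insert hi,
      V.res_add (h i (Finset.mem_insert_self i s)) (V.integers.sum_mem hs), ih hs]

def angularComponent (a : K) : 𝕜 := V.res (V.t (-V.val a) * a)

lemma angularComponent_ne_zero {a : K} (ha : a ≠ 0) : V.angularComponent a ≠ 0 := by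
  have hγ : -V.val a ∈ V.Gamma := V.valueGroup.neg_mem (V.val_mem_Gamma ha)
  have hval := V.val_t_neg_val_mul ha
  rw [angularComponent, Ne, V.res_eq_zero_iff (mul_ne_zero (V.t_ne_zero hγ) ha) hval.ge, hval]
  exact lt_irrefl 0

lemma angularComponent_mul {a b : K} (ha : a ≠ 0) (hb : b ≠ 0) :
    V.angularComponent (a * b) = V.angularComponent a * V.angularComponent b := by
  have hγa : -V.val a ∈ V.Gamma := V.valueGroup.neg_mem (V.val_mem_Gamma ha)
  have hγb : -V.val b ∈ V.Gamma := V.valueGroup.neg_mem (V.val_mem_Gamma hb)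
  have ht : V.t (-V.val (a * b)) = V.t (-V.val a) * V.t (-V.val b) := by
    rw [V.val_mul ha hb, neg_add, V.t_add hγa hγb]
  rw [angularComponent, angularComponent, angularComponent, ht,
    show V.t (-V.val a) * V.t (-V.val b) * (a * b) = V.t (-V.val a) * a * (V.t (-V.val b) * b) by
      ring,
    V.res_mul (Or.inr (V.val_t_neg_val_mul ha).ge) (Or.inr (V.val_t_neg_val_mul hb).ge)]

lemma trop_le {u : Fin m →₀ ℕ} (hu : u ∈ f.support) :
    V.trop f w ≤ V.val (coeff u f) + dotN w u :=
  csInf_le (f.support.finite_toSet.image _).bddBelow ⟨u, hu, rfl⟩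

lemma exists_trop_eq (hf : f ≠ 0) :
    ∃ u ∈ f.support, V.val (coeff u f) + dotN w u = V.trop f w := by
  have hne : (f.support : Set (Fin m →₀ ℕ)).Nonempty := by
    simpa [Finset.coe_nonempty, Finsupp.support_nonempty_iff] using hf
  exact (hne.image _).csInf_mem (f.support.finite_toSet.image _)

lemma trop_mem_Gamma (hw : ∀ i, w i ∈ V.Gamma) (hf : f ≠ 0) : V.trop f w ∈ V.Gamma := by
  obtain ⟨u, hu, hequ⟩ := V.exists_trop_eq (w := w) hf
  rw [← hequ]
  exact V.valueGroup.add_mem (V.val_mem_Gamma (mem_support_iff.1 hu)) (V.dotN_mem_Gamma hw u)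

lemma trop_smul {a : K} (ha : a ≠ 0) (hf : f ≠ 0) :
    V.trop (a • f) w = V.val a + V.trop f w := by
  have hsupp : (a • f).support = f.support := support_smul_eq ha f
  have hval : ∀ u ∈ f.support, V.val (coeff u (a • f)) = V.val a + V.val (coeff u f) :=
    fun u hu => by rw [coeff_smul, smul_eq_mul, V.val_mul ha (mem_support_iff.1 hu)]
  obtain ⟨u, hu, hequ⟩ := V.exists_trop_eq (w := w) hf
  obtain ⟨v, hv, heqv⟩ := V.exists_trop_eq (w := w) (smul_ne_zero ha hf)
  rw [hsupp] at hv
  have h₁ := V.trop_le (w := w) (hsupp ▸ hu : u ∈ (a • f).support)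
  have h₂ := V.trop_le (w := w) hv
  rw [hval u hu] at h₁
  rw [hval v hv] at heqv
  linarith

lemma coeff_initialForm (u : Fin m →₀ ℕ) :
    coeff u (V.initialForm w f) =
      if u ∈ f.support ∧ V.val (coeff u f) + dotN w u = V.trop f w
      then V.angularComponent (coeff u f) else 0 := by
  simp only [initialForm, coeff_sum, coeff_monomial, Finset.sum_ite_eq', Finset.mem_filter,
    angularComponent]

lemma coeff_initialForm_eq_zero {u : Fin m →₀ ℕ} (h : coeff u f = 0) :
    coeff u (V.initialForm w f) = 0 := by
  rw [V.coeff_initialForm, if_neg (fun h' => mem_support_iff.1 h'.1 h)]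

@[simp]
lemma initialForm_zero : V.initialForm w (0 : MvPolynomial (Fin m) K) = 0 :=
  Finset.sum_eq_zero fun _ hu => absurd (Finset.mem_filter.1 hu).1 (by simp)

lemma initialForm_smul {a : K} (ha : a ≠ 0) :
    V.initialForm w (a • f) = V.angularComponent a • V.initialForm w f := by
  rcases eq_or_ne f 0 with rfl | hf
  · simp
  ext u
  rw [coeff_smul, V.coeff_initialForm, V.coeff_initialForm, support_smul_eq ha, V.trop_smul ha hf,
    coeff_smul, smul_eq_mul]
  by_cases hu : u ∈ f.support
  · have hc := mem_support_iff.1 hu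
    rw [V.val_mul ha hc, V.angularComponent_mul ha hc, add_assoc]
    simp only [hu, true_and, add_right_inj]
    split_ifs <;> simp
  · simp [hu]

lemma coeff_initialForm_eq_res (hw : ∀ i, w i ∈ V.Gamma) (hf : f ≠ 0) (u : Fin m →₀ ℕ) :
    coeff u (V.initialForm w f) = V.res (V.t (dotN w u - V.trop f w) * coeff u f) := by
  have hγ : dotN w u - V.trop f w ∈ V.Gamma :=
    V.valueGroup.sub_mem (V.dotN_mem_Gamma hw u) (V.trop_mem_Gamma hw hf)
  rw [V.coeff_initialForm]
  by_cases hc : coeff u f = 0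
  · rw [if_neg (fun h => mem_support_iff.1 h.1 hc), hc, mul_zero, V.res_zero]
  have hu := mem_support_iff.2 hc
  by_cases heq : V.val (coeff u f) + dotN w u = V.trop f w
  · rw [if_pos ⟨hu, heq⟩, angularComponent, show -V.val (coeff u f) = dotN w u - V.trop f w by
      linarith]
  · rw [if_neg (fun h => heq h.2)]
    refine (V.res_eq_zero_of_val_pos (mul_ne_zero (V.t_ne_zero hγ) hc) ?_).symm
    rw [V.val_mul (V.t_ne_zero hγ) hc, V.val_t hγ]
    have := V.trop_le (w := w) hu
    contrapose! heq
    linarith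

lemma sum_initialForm_eq_zero (hw : ∀ i, w i ∈ V.Gamma) {ι : Type*} {s : Finset ι}
    {g : ι → MvPolynomial (Fin m) K} (hg : ∀ i ∈ s, g i ≠ 0) (hsum : ∑ i ∈ s, g i = 0)
    {μ : ℝ} (hμ : μ ∈ V.Gamma) (hle : ∀ i ∈ s, μ ≤ V.trop (g i) w) :
    ∑ i ∈ s with V.trop (g i) w = μ, V.initialForm w (g i) = 0 := by
  ext u
  have hγ : dotN w u - μ ∈ V.Gamma := V.valueGroup.sub_mem (V.dotN_mem_Gamma hw u) hμ
  set c : ι → K := fun i => V.t (dotN w u - μ) * coeff u (g i)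
  have hval : ∀ i ∈ s, c i ≠ 0 → V.trop (g i) w - μ ≤ V.val (c i) := by
    intro i _ hc
    have hcu : coeff u (g i) ≠ 0 := right_ne_zero_of_mul hc
    have := V.trop_le (w := w) (mem_support_iff.2 hcu)
    rw [V.val_mul (V.t_ne_zero hγ) hcu, V.val_t hγ]
    linarith
  have hres_zero : ∀ i ∈ s, V.res (c i) ≠ 0 → V.trop (g i) w = μ := by
    intro i hi hres
    have hc : c i ≠ 0 := fun h => hres (by rw [h, V.res_zero])
    by_contra hne
    exact hres (V.res_eq_zero_of_val_pos hc
      (lt_of_lt_of_le (sub_pos.2 (lt_of_le_of_ne (hle i hi) (Ne.symm hne))) (hval i hi hc)))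
  calc coeff u (∑ i ∈ s with V.trop (g i) w = μ, V.initialForm w (g i))
      = ∑ i ∈ s with V.trop (g i) w = μ, V.res (c i) := by
        rw [coeff_sum]
        refine Finset.sum_congr rfl fun i hi => ?_
        obtain ⟨hi, hμi⟩ := Finset.mem_filter.1 hi
        rw [V.coeff_initialForm_eq_res hw (hg i hi), hμi]
    _ = ∑ i ∈ s, V.res (c i) := Finset.sum_filter_of_ne hres_zero
    _ = V.res (∑ i ∈ s, c i) :=
        (V.res_sum s c fun i hi => or_iff_not_imp_left.2 fun hc =>
          (sub_nonneg.2 (hle i hi)).trans (hval i hi hc)).symm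
    _ = 0 := by simp [c, ← Finset.mul_sum, ← coeff_sum, hsum, V.res_zero]

lemma linearIndependent_of_linearIndependent_initialForm (hw : ∀ i, w i ∈ V.Gamma) {ι : Type*}
    {g : ι → MvPolynomial (Fin m) K}
    (hli : LinearIndependent 𝕜 fun i => V.initialForm w (g i)) : LinearIndependent K g := by
  rw [linearIndependent_iff']
  intro s a hsum i hi
  by_contra hai
  set s' := s.filter (a · ≠ 0)
  have hg : ∀ j, g j ≠ 0 := fun j h0 => hli.ne_zero j (by simp [h0])
  have hf : ∀ j ∈ s', a j • g j ≠ 0 := fun j hj => smul_ne_zero (Finset.mem_filter.1 hj).2 (hg j)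
  obtain ⟨j, hj, hjmin⟩ := s'.exists_min_image (fun j => V.trop (a j • g j) w)
    ⟨i, Finset.mem_filter.2 ⟨hi, hai⟩⟩
  have hsum' : ∑ j ∈ s', a j • g j = 0 := by
    convert hsum using 1
    exact Finset.sum_filter_of_ne fun k _ hk h => hk (by simp [h])
  have hcancel := V.sum_initialForm_eq_zero hw hf hsum' (V.trop_mem_Gamma hw (hf j hj)) hjmin
  rw [Finset.sum_congr rfl fun k hk =>
    V.initialForm_smul (Finset.mem_filter.1 (Finset.mem_filter.1 hk).1).2] at hcancel
  exact V.angularComponent_ne_zero (Finset.mem_filter.1 hj).2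
    (linearIndependent_iff'.1 hli _ _ hcancel j (Finset.mem_filter.2 ⟨hj, rfl⟩))

lemma exists_finset_span_eq_span_initialForm (hw : ∀ i, w i ∈ V.Gamma)
    (W : Submodule K (MvPolynomial (Fin m) K)) [FiniteDimensional K W] :
    ∃ b : Finset (MvPolynomial (Fin m) 𝕜),
      Submodule.span 𝕜 ↑b = Submodule.span 𝕜 (V.initialForm w '' W) ∧
        b.card ≤ Module.finrank K W := by
  obtain ⟨b, hbS, hspan, hli⟩ := exists_linearIndependent 𝕜 (V.initialForm w '' W)
  choose F hFW hFb using fun x : b => hbS x.2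
  have hF : LinearIndependent K fun x : b => (⟨F x, hFW x⟩ : W) :=
    .of_comp W.subtype <| V.linearIndependent_of_linearIndependent_initialForm hw <| by
      simpa [hFb] using hli
  have : Fintype b := @Fintype.ofFinite _ hF.finite
  exact ⟨b.toFinset, by simpa using hspan, by simpa using hF.fintype_card_le_finrank⟩

lemma finiteDimensional_span_initialForm (hw : ∀ i, w i ∈ V.Gamma)
    (W : Submodule K (MvPolynomial (Fin m) K)) [FiniteDimensional K W] :
    FiniteDimensional 𝕜 (Submodule.span 𝕜 (V.initialForm w '' W)) := by
  obtain ⟨b, hb, -⟩ := V.exists_finset_span_eq_span_initialForm hw W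
  rw [← hb]
  exact FiniteDimensional.span_finset 𝕜 b

lemma finrank_span_initialForm_le (hw : ∀ i, w i ∈ V.Gamma)
    (W : Submodule K (MvPolynomial (Fin m) K)) [FiniteDimensional K W] :
    Module.finrank 𝕜 (Submodule.span 𝕜 (V.initialForm w '' W)) ≤ Module.finrank K W := by
  obtain ⟨b, hb, hcard⟩ := V.exists_finset_span_eq_span_initialForm hw W
  rw [← hb]
  exact (finrank_span_finset_le_card b).trans hcard

/-- Cutting `W` down by the coefficient of an exponent `u` at which some `f ∈ W` attains
`trop f w` lowers `dim W` by one, and the span of initial forms by at least one: the initial forms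
of the smaller space have zero `u`-coefficient, while `in_w f` does not. -/
lemma finrank_le_finrank_span_initialForm (hw : ∀ i, w i ∈ V.Gamma)
    (W : Submodule K (MvPolynomial (Fin m) K)) [FiniteDimensional K W] :
    Module.finrank K W ≤ Module.finrank 𝕜 (Submodule.span 𝕜 (V.initialForm w '' W)) := by
  induction hr : Module.finrank K W generalizing W with
  | zero => exact Nat.zero_le _
  | succ r ih =>
    obtain ⟨f, hfW, hf0⟩ := Submodule.exists_mem_ne_zero_of_ne_bot (p := W) (by
      rintro rfl; simp at hr)
    obtain ⟨u, hu, htrop⟩ := V.exists_trop_eq (w := w) hf0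
    have hcu : coeff u f ≠ 0 := mem_support_iff.1 hu
    set W' := W ⊓ LinearMap.ker (lcoeff K u)
    have hfW' : f ∉ W' := fun h => hcu (LinearMap.mem_ker.1 (Submodule.mem_inf.1 h).2)
    have hW'lt : W' < W := SetLike.lt_iff_le_and_exists.2 ⟨inf_le_left, f, hfW, hfW'⟩
    have hW_le : W ≤ W' ⊔ K ∙ f := by
      intro g hg
      have hg' : g - (coeff u g / coeff u f) • f ∈ W' :=
        ⟨W.sub_mem hg (W.smul_mem _ hfW), by simp [div_mul_cancel₀ _ hcu]⟩
      simpa using Submodule.add_mem_sup hg' (Submodule.smul_mem _ (coeff u g / coeff u f)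
        (Submodule.mem_span_singleton_self f))
    have hW' : Module.finrank K W' = r := by
      have hlt := Submodule.finrank_lt_finrank_of_lt hW'lt
      have hle := (Submodule.finrank_mono hW_le).trans
        (Submodule.finrank_add_le_finrank_add_finrank W' (K ∙ f))
      rw [finrank_span_singleton hf0] at hle
      omega
    have hspan_lt : Submodule.span 𝕜 (V.initialForm w '' W') <
        Submodule.span 𝕜 (V.initialForm w '' W) := by
      refine SetLike.lt_iff_le_and_exists.2 ⟨Submodule.span_mono (Set.image_mono inf_le_left),
        V.initialForm w f, Submodule.subset_span ⟨f, hfW, rfl⟩, fun h => ?_⟩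
      have hker : Submodule.span 𝕜 (V.initialForm w '' W') ≤ LinearMap.ker (lcoeff 𝕜 u) := by
        rw [Submodule.span_le]
        rintro _ ⟨g, hg, rfl⟩
        exact V.coeff_initialForm_eq_zero (LinearMap.mem_ker.1 (Submodule.mem_inf.1 hg).2)
      have h0 : coeff u (V.initialForm w f) = 0 := hker h
      rw [V.coeff_initialForm, if_pos ⟨hu, htrop⟩] at h0
      exact V.angularComponent_ne_zero hcu h0
    have := V.finiteDimensional_span_initialForm hw W
    calc r + 1 ≤ Module.finrank 𝕜 (Submodule.span 𝕜 (V.initialForm w '' W')) + 1 :=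
          Nat.add_le_add_right (ih W' hW') 1
      _ ≤ _ := Submodule.finrank_lt_finrank_of_lt hspan_lt

lemma finrank_span_initialForm (hw : ∀ i, w i ∈ V.Gamma)
    (W : Submodule K (MvPolynomial (Fin m) K)) [FiniteDimensional K W] :
    Module.finrank 𝕜 (Submodule.span 𝕜 (V.initialForm w '' W)) = Module.finrank K W :=
  (V.finrank_span_initialForm_le hw W).antisymm (V.finrank_le_finrank_span_initialForm hw W)

lemma trop_X_mul (hf : f ≠ 0) (i : Fin m) : V.trop (X i * f) w = w i + V.trop f w := by
  have key : ∀ u, V.val (coeff (Finsupp.single i 1 + u) (X i * f)) +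
      dotN w (Finsupp.single i 1 + u) = w i + (V.val (coeff u f) + dotN w u) := fun u => by
    rw [coeff_X_mul, dotN_add, dotN_single]; ring
  obtain ⟨u, hu, hequ⟩ := V.exists_trop_eq (w := w) hf
  obtain ⟨v, hv, heqv⟩ := V.exists_trop_eq (w := w) (mul_ne_zero (X_ne_zero i) hf)
  rw [support_X_mul, Finset.mem_map] at hv
  obtain ⟨v, hv, rfl⟩ := hv
  have h₁ := V.trop_le (w := w) (by rw [support_X_mul]; exact Finset.mem_map_of_mem _ hu :
    Finsupp.single i 1 + u ∈ (X i * f).support)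
  have h₂ := V.trop_le (w := w) hv
  rw [key] at h₁
  rw [addLeftEmbedding_apply, key] at heqv
  linarith

lemma initialForm_X_mul (i : Fin m) :
    V.initialForm w (X i * f) = X i * V.initialForm w f := by
  rcases eq_or_ne f 0 with rfl | hf
  · simp
  rw [initialForm, initialForm, support_X_mul, Finset.filter_map, Finset.sum_map, Finset.mul_sum]
  refine Finset.sum_congr (Finset.filter_congr fun u _ => ?_) fun u _ => ?_
  · rw [Function.comp_apply, addLeftEmbedding_apply, coeff_X_mul, dotN_add, dotN_single,
      V.trop_X_mul hf]
    constructor <;> intro h <;> linarith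
  · rw [addLeftEmbedding_apply, coeff_X_mul, X, monomial_mul, one_mul]

lemma initialForm_isHomogeneous {d : ℕ} (hf : f.IsHomogeneous d) :
    (V.initialForm w f).IsHomogeneous d :=
  fun _ hu => hf fun h => hu (V.coeff_initialForm_eq_zero h)

lemma trop_le_trop_homogeneousComponent {d : ℕ} (hd : homogeneousComponent d f ≠ 0) :
    V.trop f w ≤ V.trop (homogeneousComponent d f) w := by
  obtain ⟨u, hu, hequ⟩ := V.exists_trop_eq (w := w) hd
  have hdeg : u.degree = d := by
    by_contra h
    simp [coeff_homogeneousComponent, h] at hu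
  rw [← hequ, coeff_homogeneousComponent, if_pos hdeg]
  exact V.trop_le (mem_support_iff.2 (by simpa [coeff_homogeneousComponent, hdeg] using hu))

lemma homogeneousComponent_initialForm (d : ℕ) :
    homogeneousComponent d (V.initialForm w f) =
      if V.trop (homogeneousComponent d f) w = V.trop f w
      then V.initialForm w (homogeneousComponent d f) else 0 := by
  ext u
  rw [coeff_homogeneousComponent, apply_ite (coeff u), coeff_zero]
  by_cases hdeg : u.degree = d
  swap
  · have hc : coeff u (homogeneousComponent d f) = 0 := by
      rw [coeff_homogeneousComponent, if_neg hdeg]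
    rw [if_neg hdeg, V.coeff_initialForm_eq_zero hc, ite_self]
  have hc : coeff u (homogeneousComponent d f) = coeff u f := by
    rw [coeff_homogeneousComponent, if_pos hdeg]
  rw [if_pos hdeg]
  by_cases hT : V.trop (homogeneousComponent d f) w = V.trop f w
  · simp only [V.coeff_initialForm, mem_support_iff, hc, hT, if_true]
  rw [if_neg hT, V.coeff_initialForm, if_neg]
  rintro ⟨hu, heq⟩
  have hu' : u ∈ (homogeneousComponent d f).support := by
    rw [mem_support_iff, hc]; exact mem_support_iff.1 hu
  refine hT (le_antisymm ?_ (V.trop_le_trop_homogeneousComponent fun h => by simp [h] at hu'))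
  simpa [hc, heq] using V.trop_le (w := w) hu'

lemma restrictScalars_initialIdeal :
    (V.initialIdeal w I).restrictScalars 𝕜 =
      Submodule.span 𝕜 {g | ∃ f ∈ I, g = V.initialForm w f} := by
  refine restrictScalars_ideal_span_eq_span fun i g ⟨f, hf, hg⟩ => ?_
  exact ⟨X i * f, I.mul_mem_left _ hf, by rw [hg, V.initialForm_X_mul]⟩

lemma homogeneousPart_initialIdeal (hI : IsHomogIdeal I) (d : ℕ) :
    (V.initialIdeal w I).homogeneousPart d =
      Submodule.span 𝕜 (V.initialForm w '' I.homogeneousPart d) := by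
  refine le_antisymm (fun p hp => ?_) (Submodule.span_le.2 ?_)
  · obtain ⟨hp, hpd⟩ := Ideal.mem_homogeneousPart.1 hp
    have hmap : Submodule.span 𝕜 {g | ∃ f ∈ I, g = V.initialForm w f} ≤
        (Submodule.span 𝕜 (V.initialForm w '' I.homogeneousPart d)).comap
          (homogeneousComponent d) := by
      rw [Submodule.span_le]
      rintro _ ⟨f, hf, rfl⟩
      rw [SetLike.mem_coe, Submodule.mem_comap, V.homogeneousComponent_initialForm]
      split_ifs
      · exact Submodule.subset_span ⟨_, ⟨hI f hf d, homogeneousComponent_isHomogeneous d f⟩, rfl⟩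
      · exact Submodule.zero_mem _
    have hp' : p ∈ Submodule.span 𝕜 {g | ∃ f ∈ I, g = V.initialForm w f} := by
      rw [← V.restrictScalars_initialIdeal]; exact hp
    simpa [homogeneousComponent_of_mem hpd] using hmap hp'
  · rintro _ ⟨f, hf, rfl⟩
    obtain ⟨hf, hfd⟩ := Ideal.mem_homogeneousPart.1 hf
    exact Ideal.mem_homogeneousPart.2
      ⟨Ideal.subset_span ⟨f, hf, rfl⟩, V.initialForm_isHomogeneous hfd⟩

lemma finrank_homogeneousPart_initialIdeal (hw : ∀ i, w i ∈ V.Gamma) (hI : IsHomogIdeal I)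
    (d : ℕ) :
    Module.finrank 𝕜 ((V.initialIdeal w I).homogeneousPart d) =
      Module.finrank K (I.homogeneousPart d) := by
  rw [V.homogeneousPart_initialIdeal hI, V.finrank_span_initialForm hw]

end ValSetup

theorem finitely_many_monomial_initialIdeals_general {K 𝕜 : Type} [Field K] [Field 𝕜]
    (V : ValSetup K 𝕜) {n : ℕ}
    (I : Ideal (MvPolynomial (Fin (n+1)) K)) (hI : IsHomogIdeal I) :
    {J : Ideal (MvPolynomial (Fin (n+1)) 𝕜) | IsMonomialIdeal J ∧
      ∃ w : Fin (n+1) → ℝ, (∀ i, w i ∈ V.Gamma) ∧ J = V.initialIdeal w I}.Finite := by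
  refine (finite_monomialIdeals_of_finrank_homogeneousPart_eq
    fun d => Module.finrank K (I.homogeneousPart d)).subset ?_
  rintro J ⟨hJ, w, hw, rfl⟩
  exact ⟨hJ, V.finrank_homogeneousPart_initialIdeal hw hI⟩

/-- (Proposition 3.5.)  A homogeneous ideal `I ⊆ K[x_0,…,x_n]` has only finitely many
distinct monomial initial ideals `in_w(I)` as `w` varies over `Γ^{n+1}`. -/
theorem finitely_many_monomial_initialIdeals {K 𝕜 : Type} [Field K] [Field 𝕜]
    (V : ValSetup K 𝕜) (hdense : Dense V.Gamma) (hQ : ∀ q : ℚ, (q : ℝ) ∈ V.Gamma) {n : ℕ}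
    (I : Ideal (MvPolynomial (Fin (n+1)) K)) (hI : IsHomogIdeal I) :
    {J : Ideal (MvPolynomial (Fin (n+1)) 𝕜) | IsMonomialIdeal J ∧
      ∃ w : Fin (n+1) → ℝ, (∀ i, w i ∈ V.Gamma) ∧ J = V.initialIdeal w I}.Finite :=
  finitely_many_monomial_initialIdeals_general V I hI
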